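/- arXiv:2007.12702 — 2 statements merged into one kernel-verified Lean document; each statement's English description precedes it below -/
import Mathlib

section
/- If a sequence of linear-linear data-generating processes satisfies strong infinite confounding (every diagonal entry of θθᵀ tends to infinity as m → ∞) and the entries of γ are fixed and finite, then the asymptotic bias of the naïve estimator, (θᵀθ + σ²I)⁻¹ θᵀγ, converges to the zero vector as m → ∞ (e.g., in the case k = 1: the vector (θᵀθ + σ²I)⁻¹ θᵀγ has Euclidean norm tending to 0 as ‖θ‖² → ∞). -/
open Filter Matrix

/-- (k = 1 case of strong infinite confounding.) If ‖θ(m)‖² → ∞ as m → ∞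
and γ, σ² are fixed (σ² > 0), then the naive asymptotic bias vector
(θᵀθ + σ²I)⁻¹ θᵀ γ = (γ/(‖θ‖² + σ²)) • θ has Euclidean norm |γ|·‖θ‖/(‖θ‖² + σ²),
which tends to 0. -/
theorem naive_bias_vanishes_strong_infinite_confounding
    (σ2 γ : ℝ) (hσ : 0 < σ2)
    (θ : ∀ m : ℕ, EuclideanSpace ℝ (Fin m))
    (hθ : Tendsto (fun m => ‖θ m‖ ^ 2) atTop atTop) :
    (∀ m, ‖(((‖θ m‖ ^ 2 + σ2)⁻¹ * γ) • θ m)‖ = |γ| * ‖θ m‖ / (‖θ m‖ ^ 2 + σ2)) ∧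
    Tendsto (fun m => |γ| * ‖θ m‖ / (‖θ m‖ ^ 2 + σ2)) atTop (nhds 0) := by
  have hpos : ∀ m, 0 < ‖θ m‖ ^ 2 + σ2 := fun m => by positivity
  constructor
  · intro m
    rw [norm_smul, Real.norm_eq_abs, abs_mul, abs_inv, abs_of_pos (hpos m)]
    ring
  · have hnorm : Tendsto (fun m => ‖θ m‖) atTop atTop := by
      refine tendsto_atTop.2 fun C => ?_
      filter_upwards [hθ.eventually_ge_atTop ((max C 0) ^ 2)] with m hm
      have h0 : max C 0 ≤ ‖θ m‖ := by
        nlinarith [norm_nonneg (θ m), le_max_right C 0]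
      exact le_trans (le_max_left C 0) h0
    have hdiv : Tendsto (fun m => |γ| / ‖θ m‖) atTop (nhds 0) :=
      tendsto_const_nhds.div_atTop hnorm
    refine squeeze_zero' ?_ ?_ hdiv
    · filter_upwards with m
      positivity
    · filter_upwards [hnorm.eventually_gt_atTop 0] with m hm
      rw [div_le_div_iff₀ (hpos m) hm]
      have : ‖θ m‖ * ‖θ m‖ ≤ ‖θ m‖ ^ 2 + σ2 := by nlinarith
      nlinarith [abs_nonneg γ]
end

section
/- Let A = U D Vᵀ be the SVD of an n×m matrix A with distinct nonzero singular values, and let Ẑ = √n U_{1:k}. Then the augmented matrix [A, Ẑ] has a singular value decomposition whose left-singular vectors for the top k components coincide with those of A, whose squared singular values for the top k components equal D_{1:k}² + nI (i.e., the j-th squared singular value is d_j² + n for j ≤ k), whose remaining nonzero squared singular values are d_j² for k < j ≤ m, and which has k zero singular values. -/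
open Matrix

lemma extend_cols {ι : Type*} [Fintype ι] [DecidableEq ι] {r k : ℕ}
    (h : r + k ≤ Fintype.card ι) (B : Matrix ι (Fin r) ℝ) (hB : Bᵀ * B = 1) :
    ∃ C : Matrix ι (Fin k) ℝ, Bᵀ * C = 0 ∧ Cᵀ * C = 1 := by
  set N := Fintype.card ι with hN
  have card_eq : Module.finrank ℝ (EuclideanSpace ℝ ι) = Fintype.card (Fin N) := by
    simp [finrank_euclideanSpace, hN]
  set v : Fin N → EuclideanSpace ℝ ι := fun i =>
    if h : (i : ℕ) < r then (WithLp.toLp 2 (fun l => B l ⟨i, h⟩)) else 0 with hv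
  set s : Set (Fin N) := {i | (i : ℕ) < r} with hs
  have hinner : ∀ (x y : EuclideanSpace ℝ ι), inner ℝ x y = ∑ l, x l * y l := by
    intro x y
    simp [PiLp.inner_apply, RCLike.inner_apply, mul_comm]
  have horth : Orthonormal ℝ (s.restrict v) := by
    rw [orthonormal_iff_ite]
    rintro ⟨i, hi⟩ ⟨j, hj⟩
    have hi' : (i : ℕ) < r := hi
    have hj' : (j : ℕ) < r := hj
    have := congrFun (congrFun hB ⟨i, hi'⟩) ⟨j, hj'⟩
    simp only [Matrix.mul_apply, Matrix.transpose_apply, Matrix.one_apply] at this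
    change inner ℝ (v i) (v j) = _
    rw [hinner]
    simp only [hv, dif_pos hi', dif_pos hj', WithLp.ofLp_toLp]
    rw [this]
    by_cases hij : i = j
    · subst hij; simp
    · have : (⟨i, hi'⟩ : Fin r) ≠ ⟨j, hj'⟩ := by
        simp [Fin.ext_iff]; omega
      have h2 : (⟨i, hi⟩ : s) ≠ ⟨j, hj⟩ := by
        simp [Subtype.ext_iff, Fin.ext_iff]; omega
      simp [this, h2]
  obtain ⟨b, hb⟩ := horth.exists_orthonormalBasis_extension_of_card_eq card_eq
  refine ⟨Matrix.of fun l j => b ⟨r + j, by omega⟩ l, ?_, ?_⟩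
  · ext i j
    have hbi : b ⟨(i : ℕ), by omega⟩ = v ⟨(i : ℕ), by omega⟩ := hb _ i.isLt
    have key : inner ℝ (b ⟨(i : ℕ), by omega⟩) (b ⟨r + j, by omega⟩) = (0 : ℝ) := by
      rw [orthonormal_iff_ite] at *
      have := b.orthonormal
      rw [orthonormal_iff_ite] at this
      rw [this]
      have : (⟨(i : ℕ), by omega⟩ : Fin N) ≠ ⟨r + j, by omega⟩ := by
        simp [Fin.ext_iff]; omega
      simp [this]
    rw [hbi, hinner] at key
    simp only [hv, dif_pos i.isLt, WithLp.ofLp_toLp] at key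
    simp only [Matrix.mul_apply, Matrix.transpose_apply, Matrix.of_apply, Matrix.zero_apply]
    convert key using 2
  · ext i j
    have := b.orthonormal
    rw [orthonormal_iff_ite] at this
    have key := this ⟨r + i, by omega⟩ ⟨r + j, by omega⟩
    rw [hinner] at key
    simp only [Matrix.mul_apply, Matrix.transpose_apply, Matrix.of_apply, Matrix.one_apply]
    rw [key]
    by_cases hij : i = j
    · subst hij; simp
    · have : (⟨r + i, by omega⟩ : Fin N) ≠ ⟨r + j, by omega⟩ := by
        simp [Fin.ext_iff]; omega
      simp [this, hij]

/-- If A = U D Vᵀ (rank m, distinct nonzero singular values) and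
Ẑ = √n·U_{1:k}, then [A, Ẑ] has an SVD whose top-k left-singular vectors coincide with
those of A, whose top-k squared singular values are d_j² + n, whose remaining nonzero
squared singular values are d_j² (k < j ≤ m), and which has k zero singular values. -/
theorem augmented_svd_structure {n m k : ℕ}
    (hkm : k ≤ m) (hn : m + k ≤ n)
    (U : Matrix (Fin n) (Fin m) ℝ) (hU : Uᵀ * U = 1)
    (D : Matrix (Fin m) (Fin m) ℝ) (hDdiag : ∀ i j, i ≠ j → D i j = 0)
    (hDpos : ∀ i, 0 < D i i)
    (hdistinct : ∀ i j : Fin m, i ≠ j → D i i ≠ D j j)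
    (V : Matrix (Fin m) (Fin m) ℝ) (hV : Vᵀ * V = 1)
    (A : Matrix (Fin n) (Fin m) ℝ) (hA : A = U * D * Vᵀ)
    (Zhat : Matrix (Fin n) (Fin k) ℝ)
    (hZ : Zhat = Matrix.of fun i j => Real.sqrt n * U i (Fin.castLE hkm j)) :
    ∃ (Ustar : Matrix (Fin n) (Fin m ⊕ Fin k) ℝ)
      (Vstar : Matrix (Fin m ⊕ Fin k) (Fin m ⊕ Fin k) ℝ)
      (s : Fin m ⊕ Fin k → ℝ),
      Ustarᵀ * Ustar = 1 ∧ Vstarᵀ * Vstar = 1 ∧ (∀ x, 0 ≤ s x) ∧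
      Matrix.fromCols A Zhat = Ustar * Matrix.diagonal s * Vstarᵀ ∧
      (∀ j : Fin m, (j : ℕ) < k → ∀ i, Ustar i (Sum.inl j) = U i j) ∧
      (∀ j : Fin m, (j : ℕ) < k → s (Sum.inl j) ^ 2 = D j j ^ 2 + n) ∧
      (∀ j : Fin m, k ≤ (j : ℕ) → s (Sum.inl j) ^ 2 = D j j ^ 2) ∧
      (∀ j : Fin k, s (Sum.inr j) = 0) := by
  -- the singular values
  set s0 : Fin m → ℝ := fun j => if (j : ℕ) < k then Real.sqrt (D j j ^ 2 + n) else D j j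
    with hs0
  set s : Fin m ⊕ Fin k → ℝ := Sum.elim s0 (fun _ => 0) with hs
  have hs0pos : ∀ j, 0 < s0 j := by
    intro j
    by_cases hj : (j : ℕ) < k
    · simp only [hs0, if_pos hj]
      apply Real.sqrt_pos.2
      have h1 := pow_pos (hDpos j) 2
      have h2 : (0:ℝ) ≤ n := Nat.cast_nonneg n
      linarith
    · simpa [hs0, if_neg hj] using hDpos j
  have hs0sq : ∀ j, s0 j ^ 2 = D j j ^ 2 + if (j : ℕ) < k then (n : ℝ) else 0 := by
    intro j
    by_cases hj : (j : ℕ) < k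
    · simp only [hs0, if_pos hj]
      rw [Real.sq_sqrt (by positivity)]
    · simp [hs0, if_neg hj]
  -- D is diagonal
  have hDdiag' : D = Matrix.diagonal (fun i => D i i) := by
    ext i j
    by_cases hij : i = j
    · subst hij; simp
    · simp [Matrix.diagonal_apply_ne _ hij, hDdiag i j hij]
  -- the second block of M
  set C : Matrix (Fin m) (Fin k) ℝ :=
    Matrix.of (fun j l => Real.sqrt n * (if j = Fin.castLE hkm l then 1 else 0)) with hC
  set M : Matrix (Fin m) (Fin m ⊕ Fin k) ℝ := fromCols (D * Vᵀ) C with hM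
  have hUM : Matrix.fromCols A Zhat = U * M := by
    have h1 : A = U * (D * Vᵀ) := by rw [hA, Matrix.mul_assoc]
    have h2 : Zhat = U * C := by
      rw [hZ]
      ext i l
      simp only [Matrix.mul_apply, Matrix.of_apply, hC]
      rw [Finset.sum_eq_single (Fin.castLE hkm l)]
      · simp [mul_comm]
      · intro b _ hb; simp [hb]
      · simp
    rw [hM, mul_fromCols, ← h1, ← h2]
  -- C * Cᵀ
  have hCCt : C * Cᵀ = Matrix.diagonal (fun i : Fin m => if (i : ℕ) < k then (n : ℝ) else 0) := by
    ext i j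
    simp only [Matrix.mul_apply, Matrix.transpose_apply, Matrix.of_apply, hC]
    by_cases hij : i = j
    · subst hij
      by_cases hik : (i : ℕ) < k
      · rw [Finset.sum_eq_single (⟨(i : ℕ), hik⟩ : Fin k)]
        · have hcast : i = Fin.castLE hkm ⟨(i : ℕ), hik⟩ := by
            simp [Fin.ext_iff]
          rw [if_pos hcast, Matrix.diagonal_apply_eq, if_pos hik, mul_one,
            Real.mul_self_sqrt (Nat.cast_nonneg n)]
        · intro b _ hb
          have : i ≠ Fin.castLE hkm b := by
            intro hcon
            apply hb
            simp [Fin.ext_iff] at hcon ⊢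
            omega
          simp [this]
        · simp
      · rw [Finset.sum_eq_zero, Matrix.diagonal_apply_eq, if_neg hik]
        intro b _
        have : i ≠ Fin.castLE hkm b := by
          intro hcon
          simp [Fin.ext_iff] at hcon
          omega
        simp [this]
    · rw [Finset.sum_eq_zero, Matrix.diagonal_apply_ne _ hij]
      intro b _
      by_cases h1 : i = Fin.castLE hkm b
      · have : j ≠ Fin.castLE hkm b := fun hcon => hij (by rw [h1, hcon])
        simp [this]
      · simp [h1]
  -- M * Mᵀ = diagonal of squared singular values
  have hDT : Dᵀ = D := by
    ext i j
    rcases eq_or_ne i j with rfl | h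
    · rfl
    · simp [Matrix.transpose_apply, hDdiag j i (Ne.symm h), hDdiag i j h]
  have hMMt : M * Mᵀ = Matrix.diagonal (fun j => s0 j ^ 2) := by
    rw [hM, transpose_fromCols, fromCols_mul_fromRows, Matrix.transpose_mul,
      Matrix.transpose_transpose, Matrix.mul_assoc, ← Matrix.mul_assoc Vᵀ, hV,
      Matrix.one_mul, hCCt, hDT, hDdiag', Matrix.diagonal_mul_diagonal,
      Matrix.diagonal_add]
    have hfun2 : (fun i : Fin m => D i i * D i i + if (i:ℕ) < k then (n:ℝ) else 0)
        = fun j => s0 j ^ 2 := by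
      funext j; rw [hs0sq j, pow_two]
    rw [hfun2]
  -- W has orthonormal rows
  set g : Fin m → ℝ := fun j => (s0 j)⁻¹ with hg
  set W : Matrix (Fin m) (Fin m ⊕ Fin k) ℝ := Matrix.diagonal g * M with hW
  have hWWt : W * Wᵀ = 1 := by
    rw [hW, Matrix.transpose_mul, Matrix.diagonal_transpose]
    rw [show Matrix.diagonal g * M * (Mᵀ * Matrix.diagonal g)
        = Matrix.diagonal g * (M * Mᵀ) * Matrix.diagonal g by
      simp only [Matrix.mul_assoc]]
    rw [hMMt, Matrix.diagonal_mul_diagonal, Matrix.diagonal_mul_diagonal]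
    have hfun : (fun i => g i * s0 i ^ 2 * g i) = fun _ : Fin m => (1:ℝ) := by
      funext j
      have h := (hs0pos j).ne'
      simp only [hg]
      field_simp
    rw [hfun, Matrix.diagonal_one]
  -- extend U to Ustar
  obtain ⟨CU, hCU0, hCU1⟩ := extend_cols (ι := Fin n) (k := k) (by simpa using hn) U hU
  -- extend Wᵀ to Vstar
  obtain ⟨CV, hCV0, hCV1⟩ :=
    extend_cols (ι := Fin m ⊕ Fin k) (k := k) (by simp) Wᵀ (by rwa [Matrix.transpose_transpose])
  refine ⟨fromCols U CU, fromCols Wᵀ CV, s, ?_, ?_, ?_, ?_, ?_, ?_, ?_, ?_⟩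
  · have h2 : CUᵀ * U = 0 := by
      have := congrArg Matrix.transpose hCU0
      simpa [Matrix.transpose_mul] using this
    rw [transpose_fromCols, fromRows_mul_fromCols, hU, hCU1, hCU0, h2,
      fromBlocks_one]
  · have h1 : W * CV = 0 := by rwa [Matrix.transpose_transpose] at hCV0
    have h2 : CVᵀ * Wᵀ = 0 := by
      have := congrArg Matrix.transpose h1
      simpa [Matrix.transpose_mul] using this
    rw [transpose_fromCols, fromRows_mul_fromCols, Matrix.transpose_transpose,
      hWWt, h1, h2, hCV1, fromBlocks_one]
  · rintro (j | l)
    · exact (hs0pos j).le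
    · simp [hs]
  · rw [hUM, hs, ← fromBlocks_diagonal, transpose_fromCols, fromCols_mul_fromBlocks]
    simp only [Matrix.diagonal_zero, Matrix.mul_zero, Matrix.zero_mul, add_zero, zero_add,
      Matrix.transpose_transpose]
    rw [fromCols_mul_fromRows, Matrix.zero_mul, add_zero, Matrix.mul_assoc]
    congr 1
    rw [hW, ← Matrix.mul_assoc, Matrix.diagonal_mul_diagonal]
    rw [show (fun i => s0 i * g i) = fun _ => (1:ℝ) from funext fun i => by
      rw [hg]; exact mul_inv_cancel₀ (hs0pos i).ne']
    simp
  · intro j hj i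
    simp [fromCols_apply_inl]
  · intro j hj
    rw [hs]
    simpa [if_pos hj] using hs0sq j
  · intro j hj
    rw [hs]
    simp only [Sum.elim_inl]
    rw [hs0sq j, if_neg (by omega), add_zero]
  · intro j
    simp [hs]
end
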